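/- Let H be a complex Hilbert space and let P, Q be orthogonal projections on H with ‖P − Q‖ < 1. Then the Kato–Nagy operator W := (I − (P − Q)²)^{-1/2} (PQ + (I − P)(I − Q)) is a well-defined unitary operator satisfying W Q W⁻¹ = P. -/

import Mathlib

/-!
For orthogonal projections `p, q` and `u = pq + (1 - p)(1 - q)` one has `u q = p u`, and both
`u u*` and `u* u` equal `a = 1 - (p - q)²`, which commutes with `p`, `q` and hence with `u`. When
`‖p - q‖ < 1` the element `a` is strictly positive, so `s = √a` is an invertible self-adjoint
element commuting with `p` and `u`. Dividing `u` by its modulus `s` then gives a unitary, and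
`s⁻¹ u q u* s⁻¹ = s⁻¹ p a s⁻¹ = p`.
-/

open scoped Ring

def pairProd {R : Type*} [Ring R] (p q : R) : R := p * q + (1 - p) * (1 - q)

section Idempotent

variable {R : Type*} [Ring R] {p q : R}

theorem pairProd_mul_pairProd (hp : IsIdempotentElem p) (hq : IsIdempotentElem q) :
    pairProd p q * pairProd q p = 1 - (p - q) ^ 2 := by
  simp only [pairProd, sq, mul_sub, sub_mul, mul_add, add_mul, mul_one, one_mul, mul_assoc,
    hp.eq, hq.eq, hq.mul_self_mul]
  noncomm_ring

theorem pairProd_mul_right (hp : IsIdempotentElem p) (hq : IsIdempotentElem q) :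
    pairProd p q * q = p * pairProd p q := by
  simp only [pairProd, mul_sub, sub_mul, mul_add, add_mul, mul_one, one_mul, mul_assoc,
    hp.eq, hq.eq, hp.mul_self_mul]
  noncomm_ring

theorem IsIdempotentElem.commute_sub_sq (hp : IsIdempotentElem p) (hq : IsIdempotentElem q) :
    Commute p ((p - q) ^ 2) := by
  simp only [Commute, SemiconjBy, sq, mul_sub, sub_mul, mul_assoc, hp.eq, hq.eq, hp.mul_self_mul]
  noncomm_ring

theorem commute_pairProd_one_sub_sub_sq (hp : IsIdempotentElem p) (hq : IsIdempotentElem q) :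
    Commute (pairProd p q) (1 - (p - q) ^ 2) := by
  have hpa : Commute p (1 - (p - q) ^ 2) := (Commute.one_right p).sub_right (hp.commute_sub_sq hq)
  have hqa : Commute q (1 - (p - q) ^ 2) := by
    rw [← neg_sub q p, neg_sq]
    exact (Commute.one_right q).sub_right (hq.commute_sub_sq hp)
  exact (hpa.mul_left hqa).add_left
    (((Commute.one_left _).sub_left hpa).mul_left ((Commute.one_left _).sub_left hqa))

end Idempotent

section StarRing

variable {R : Type*} [Ring R] [StarRing R]

section Projections

variable {p q : R} (hp : IsIdempotentElem p) (hp_sa : IsSelfAdjoint p)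
  (hq : IsIdempotentElem q) (hq_sa : IsSelfAdjoint q)
include hp hp_sa hq hq_sa

theorem pairProd_mul_star_self : pairProd p q * star (pairProd p q) = 1 - (p - q) ^ 2 := by
  rw [← pairProd_mul_pairProd hp hq]
  simp [pairProd, hp_sa.star_eq, hq_sa.star_eq]

theorem star_pairProd_mul_self : star (pairProd p q) * pairProd p q = 1 - (p - q) ^ 2 := by
  rw [← neg_sub q p, neg_sq, ← pairProd_mul_pairProd hq hp]
  simp [pairProd, hp_sa.star_eq, hq_sa.star_eq]

end Projections

variable {s u : R}

theorem ringInverse_mul_mem_unitary (hs : IsUnit s) (hs_sa : IsSelfAdjoint s) (hsu : Commute s u)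
    (h_star_mul : star u * u = s * s) (h_mul_star : u * star u = s * s) :
    s⁻¹ʳ * u ∈ unitary R := by
  have hstar : star (s⁻¹ʳ * u) = star u * s⁻¹ʳ := by rw [star_mul, hs_sa.ringInverse.star_eq]
  obtain ⟨s, rfl⟩ := hs
  rw [Ring.inverse_unit] at hstar ⊢
  have hinv_u : Commute ↑s⁻¹ u := hsu.units_inv_left
  refine Unitary.mem_iff.mpr ⟨?_, ?_⟩
  · calc star (↑s⁻¹ * u) * (↑s⁻¹ * u) = star u * ((↑s⁻¹ * ↑s⁻¹) * u) := by
          rw [hstar]; noncomm_ring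
      _ = star u * u * ↑s⁻¹ * ↑s⁻¹ := by rw [(hinv_u.mul_left hinv_u).eq]; noncomm_ring
      _ = 1 := by simp [h_star_mul, mul_assoc]
  · calc ↑s⁻¹ * u * star (↑s⁻¹ * u) = ↑s⁻¹ * (u * star u) * ↑s⁻¹ := by
          rw [hstar]; noncomm_ring
      _ = 1 := by simp [h_mul_star]

theorem ringInverse_mul_mul_mul_star {p q : R} (hs : IsUnit s) (hs_sa : IsSelfAdjoint s)
    (hps : Commute p s) (huq : u * q = p * u) (h_mul_star : u * star u = s * s) :
    s⁻¹ʳ * u * q * star (s⁻¹ʳ * u) = p := by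
  have hstar : star (s⁻¹ʳ * u) = star u * s⁻¹ʳ := by rw [star_mul, hs_sa.ringInverse.star_eq]
  obtain ⟨s, rfl⟩ := hs
  rw [Ring.inverse_unit] at hstar ⊢
  calc ↑s⁻¹ * u * q * star (↑s⁻¹ * u) = ↑s⁻¹ * p * (u * star u) * ↑s⁻¹ := by
        rw [hstar, mul_assoc _ u q, huq]; noncomm_ring
    _ = ↑s⁻¹ * (p * ↑s) := by simp [h_mul_star, ← mul_assoc]
    _ = p := by rw [hps.eq, Units.inv_mul_cancel_left]

end StarRing

section CStarAlgebra

variable {A : Type*} [CStarAlgebra A] [PartialOrder A] [StarOrderedRing A]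

theorem IsSelfAdjoint.isStrictlyPositive_one_sub_sq {d : A} (hd : IsSelfAdjoint d)
    (h : ‖d‖ < 1) : IsStrictlyPositive (1 - d ^ 2) := by
  have hsq : ‖d ^ 2‖ < 1 := by
    rw [sq, hd.norm_mul_self]
    exact pow_lt_one₀ (norm_nonneg d) h two_ne_zero
  rw [IsStrictlyPositive.iff_of_unital]
  exact ⟨sub_nonneg.mpr <| (CStarAlgebra.norm_le_one_iff_of_nonneg _ hd.sq_nonneg).mp hsq.le,
    isUnit_one_sub_of_norm_lt_one hsq⟩

theorem Commute.cfcSqrt_left {a b : A} (h : Commute a b) : Commute (CFC.sqrt a) b := by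
  rw [CFC.sqrt_eq_cfc]
  exact h.cfc_nnreal _

noncomputable def katoNagy (p q : A) : A := (CFC.sqrt (1 - (p - q) ^ 2))⁻¹ʳ * pairProd p q

variable {p q : A} (hp : IsIdempotentElem p) (hp_sa : IsSelfAdjoint p)
  (hq : IsIdempotentElem q) (hq_sa : IsSelfAdjoint q) (hpq : ‖p - q‖ < 1)
include hp hp_sa hq hq_sa hpq

theorem katoNagy_mem_unitary : katoNagy p q ∈ unitary A := by
  have ha := (hp_sa.sub hq_sa).isStrictlyPositive_one_sub_sq hpq
  refine ringInverse_mul_mem_unitary ha.isUnit_cfcSqrt (CFC.sqrt_nonneg _).isSelfAdjoint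
    (commute_pairProd_one_sub_sub_sq hp hq).symm.cfcSqrt_left ?_ ?_ <;>
    rw [CFC.sqrt_mul_sqrt_self _ ha.nonneg]
  · exact star_pairProd_mul_self hp hp_sa hq hq_sa
  · exact pairProd_mul_star_self hp hp_sa hq hq_sa

theorem katoNagy_mul_mul_star : katoNagy p q * q * star (katoNagy p q) = p := by
  have ha := (hp_sa.sub hq_sa).isStrictlyPositive_one_sub_sq hpq
  refine ringInverse_mul_mul_mul_star ha.isUnit_cfcSqrt (CFC.sqrt_nonneg _).isSelfAdjoint
    ((Commute.one_right p).sub_right (hp.commute_sub_sq hq)).symm.cfcSqrt_left.symm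
    (pairProd_mul_right hp hq) ?_
  rw [CFC.sqrt_mul_sqrt_self _ ha.nonneg]
  exact pairProd_mul_star_self hp hp_sa hq hq_sa

end CStarAlgebra

/-- **Kato–Nagy.** If `P, Q` are orthogonal projections on a complex Hilbert space with
`‖P - Q‖ < 1`, then `W = (I - (P - Q)^2)^{-1/2} (PQ + (I-P)(I-Q))` is unitary and
conjugates `Q` to `P` (for a unitary, `W⁻¹ = W*`). -/
theorem kato_nagy {H : Type*} [NormedAddCommGroup H] [InnerProductSpace ℂ H]
    [CompleteSpace H] (P Q : H →L[ℂ] H)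
    (hPidem : IsIdempotentElem P) (hPsa : IsSelfAdjoint P)
    (hQidem : IsIdempotentElem Q) (hQsa : IsSelfAdjoint Q)
    (hPQ : ‖P - Q‖ < 1)
    (W : H →L[ℂ] H)
    (hW : W = Ring.inverse (CFC.sqrt (1 - (P - Q) ^ 2)) * (P * Q + (1 - P) * (1 - Q))) :
    W ∈ unitary (H →L[ℂ] H) ∧ W * Q * star W = P := by
  subst hW
  exact ⟨katoNagy_mem_unitary hPidem hPsa hQidem hQsa hPQ,
    katoNagy_mul_mul_star hPidem hPsa hQidem hQsa hPQ⟩
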